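/- arXiv:1101.4791 — 4 statements merged into one kernel-verified Lean document; each statement's English description precedes it below -/
import Mathlib

section
/- If μ₁ and μ₂ are fuzzy left ideals of a Γ-semiring S (with μ₁(0)=μ₂(0)=1), then their sum μ₁⊕μ₂, defined by (μ₁⊕μ₂)(x) = sup over all decompositions x = u+v of min(μ₁(u), μ₂(v)), is a fuzzy left ideal of S. -/
open Classical

/-- A Γ-semiring: additive commutative monoids `S` and `G` with a triadditive,
associative product `tmul : S → G → S → S` for which zero is absorbing. -/
class GammaSemiring (S : Type*) (G : Type*) [AddCommMonoid S] [AddCommMonoid G] where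
  tmul : S → G → S → S
  add_tmul : ∀ (a b : S) (γ : G) (c : S), tmul (a + b) γ c = tmul a γ c + tmul b γ c
  tmul_add : ∀ (a : S) (γ : G) (b c : S), tmul a γ (b + c) = tmul a γ b + tmul a γ c
  tmul_gadd : ∀ (a : S) (γ δ : G) (b : S), tmul a (γ + δ) b = tmul a γ b + tmul a δ b
  tmul_assoc : ∀ (a : S) (γ : G) (b : S) (δ : G) (c : S),
      tmul a γ (tmul b δ c) = tmul (tmul a γ b) δ c
  zero_tmul : ∀ (γ : G) (x : S), tmul 0 γ x = 0
  tmul_zero : ∀ (x : S) (γ : G), tmul x γ 0 = 0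
  tmul_gzero : ∀ (x y : S), tmul x 0 y = 0

/-- μ is a fuzzy left ideal: `[0,1]`-valued, `μ 0 = 1`, superadditive under `min`,
and `μ (xγy) ≥ μ y`. -/
def IsFuzzyLeftIdeal (S G : Type*) [AddCommMonoid S] [AddCommMonoid G]
    [GammaSemiring S G] (μ : S → ℝ) : Prop :=
  (∀ x, μ x ∈ Set.Icc (0 : ℝ) 1) ∧ μ 0 = 1 ∧
  (∀ x y, min (μ x) (μ y) ≤ μ (x + y)) ∧
  (∀ (x : S) (γ : G) (y : S), μ y ≤ μ (GammaSemiring.tmul x γ y))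

/-- μ is a fuzzy right ideal. -/
def IsFuzzyRightIdeal (S G : Type*) [AddCommMonoid S] [AddCommMonoid G]
    [GammaSemiring S G] (μ : S → ℝ) : Prop :=
  (∀ x, μ x ∈ Set.Icc (0 : ℝ) 1) ∧ μ 0 = 1 ∧
  (∀ x y, min (μ x) (μ y) ≤ μ (x + y)) ∧
  (∀ (x : S) (γ : G) (y : S), μ x ≤ μ (GammaSemiring.tmul x γ y))

/-- μ is a fuzzy (two-sided) ideal. -/
def IsFuzzyIdeal (S G : Type*) [AddCommMonoid S] [AddCommMonoid G]
    [GammaSemiring S G] (μ : S → ℝ) : Prop :=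
  (∀ x, μ x ∈ Set.Icc (0 : ℝ) 1) ∧ μ 0 = 1 ∧
  (∀ x y, min (μ x) (μ y) ≤ μ (x + y)) ∧
  (∀ (x : S) (γ : G) (y : S), max (μ x) (μ y) ≤ μ (GammaSemiring.tmul x γ y))

/-- The sum `μ ⊕ ν` of fuzzy subsets: `(μ ⊕ ν)(x) = sup { min (μ u) (ν v) : x = u + v }`. -/
noncomputable def fSum {S : Type*} [AddCommMonoid S] (μ ν : S → ℝ) : S → ℝ := fun x =>
  sSup {r : ℝ | ∃ u v : S, x = u + v ∧ r = min (μ u) (ν v)}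

/-- The product `μ Γ ν`: `(μ Γ ν)(x) = sup { min (μ u) (ν v) : x = uγv }`
(`sSup ∅ = 0` in `ℝ`, matching the convention that it is `0` with no representation). -/
noncomputable def fProd (S G : Type*) [AddCommMonoid S] [AddCommMonoid G]
    [GammaSemiring S G] (μ ν : S → ℝ) : S → ℝ := fun x =>
  sSup {r : ℝ | ∃ (u : S) (γ : G) (v : S),
    x = GammaSemiring.tmul u γ v ∧ r = min (μ u) (ν v)}

/-- The composition `μ ∘ ν`:
`(μ ∘ ν)(x) = sup { min_{1 ≤ i ≤ n} min (μ uᵢ) (ν vᵢ) : x = Σᵢ uᵢγᵢvᵢ, n ≥ 1 }`. -/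
noncomputable def fComp (S G : Type*) [AddCommMonoid S] [AddCommMonoid G]
    [GammaSemiring S G] (μ ν : S → ℝ) : S → ℝ := fun x =>
  sSup {r : ℝ | ∃ (n : ℕ) (u v : Fin (n + 1) → S) (γ : Fin (n + 1) → G),
    x = ∑ i, GammaSemiring.tmul (u i) (γ i) (v i) ∧
    r = Finset.univ.inf' Finset.univ_nonempty (fun i => min (μ (u i)) (ν (v i)))}

/-! Every bound on a value of `fSum μ ν` is checked on single decompositions: decompositions
`x = u + v` and `y = u' + v'` combine into `x + y = (u + u') + (v + v')`, which gives the additivity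
of the sum, and `y = u + v` gives `xγy = xγu + xγv`, which gives the left ideal property. -/

theorem min_csSup_le_of_forall_min_le {α : Type*} [ConditionallyCompleteLinearOrder α]
    {A B : Set α} {c : α} (hA : A.Nonempty) (hB : B.Nonempty)
    (h : ∀ a ∈ A, ∀ b ∈ B, min a b ≤ c) : min (sSup A) (sSup B) ≤ c := by
  by_contra! hc
  obtain ⟨a, ha, hca⟩ := exists_lt_of_lt_csSup hA (lt_min_iff.1 hc).1
  obtain ⟨b, hb, hcb⟩ := exists_lt_of_lt_csSup hB (lt_min_iff.1 hc).2
  exact (h a ha b hb).not_gt (lt_min hca hcb)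

section fSum

variable {S T : Type*} [AddCommMonoid S] [AddCommMonoid T] {μ ν : S → ℝ} {c : ℝ}

theorem fSum_set_nonempty (μ ν : S → ℝ) (x : S) :
    {r : ℝ | ∃ u v : S, x = u + v ∧ r = min (μ u) (ν v)}.Nonempty :=
  ⟨_, x, 0, (add_zero x).symm, rfl⟩

theorem fSum_set_bddAbove (hμ : ∀ x, μ x ≤ c) (x : S) :
    BddAbove {r : ℝ | ∃ u v : S, x = u + v ∧ r = min (μ u) (ν v)} :=
  ⟨c, by rintro _ ⟨u, v, -, rfl⟩; exact (min_le_left _ _).trans (hμ u)⟩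

theorem min_le_fSum_add (hμ : ∀ x, μ x ≤ c) (u v : S) :
    min (μ u) (ν v) ≤ fSum μ ν (u + v) :=
  le_csSup (fSum_set_bddAbove hμ _) ⟨u, v, rfl, rfl⟩

theorem fSum_le_of_forall (x : S) (h : ∀ u v, x = u + v → min (μ u) (ν v) ≤ c) :
    fSum μ ν x ≤ c :=
  csSup_le (fSum_set_nonempty μ ν x) (by rintro _ ⟨u, v, hx, rfl⟩; exact h u v hx)

theorem fSum_mem_Icc (hμ : ∀ x, μ x ∈ Set.Icc (0 : ℝ) 1) (hν : ∀ x, 0 ≤ ν x) (x : S) :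
    fSum μ ν x ∈ Set.Icc (0 : ℝ) 1 := by
  refine ⟨?_, fSum_le_of_forall x fun u _ _ => (min_le_left _ _).trans (hμ u).2⟩
  calc (0 : ℝ) ≤ min (μ x) (ν 0) := le_min (hμ x).1 (hν 0)
    _ ≤ fSum μ ν (x + 0) := min_le_fSum_add (fun x => (hμ x).2) x 0
    _ = fSum μ ν x := by rw [add_zero]

theorem fSum_zero_eq_one (hμ : ∀ x, μ x ≤ 1) (hμ₀ : μ 0 = 1) (hν₀ : ν 0 = 1) :
    fSum μ ν 0 = 1 := by
  refine le_antisymm (fSum_le_of_forall 0 fun u _ _ => (min_le_left _ _).trans (hμ u)) ?_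
  simpa [hμ₀, hν₀] using min_le_fSum_add (ν := ν) hμ 0 0

theorem min_fSum_le_fSum_add (hμ : ∀ x, μ x ≤ c)
    (hμ_add : ∀ x y, min (μ x) (μ y) ≤ μ (x + y))
    (hν_add : ∀ x y, min (ν x) (ν y) ≤ ν (x + y)) (x y : S) :
    min (fSum μ ν x) (fSum μ ν y) ≤ fSum μ ν (x + y) := by
  refine min_csSup_le_of_forall_min_le (fSum_set_nonempty μ ν x) (fSum_set_nonempty μ ν y) ?_
  rintro _ ⟨u, v, rfl, rfl⟩ _ ⟨u', v', rfl, rfl⟩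
  calc min (min (μ u) (ν v)) (min (μ u') (ν v'))
      = min (min (μ u) (μ u')) (min (ν v) (ν v')) := min_min_min_comm _ _ _ _
    _ ≤ min (μ (u + u')) (ν (v + v')) := min_le_min (hμ_add u u') (hν_add v v')
    _ ≤ fSum μ ν (u + u' + (v + v')) := min_le_fSum_add hμ _ _
    _ = fSum μ ν (u + v + (u' + v')) := by rw [add_add_add_comm]

theorem fSum_le_fSum_map {μ' ν' : T → ℝ} (hμ' : ∀ x, μ' x ≤ c) (f : S → T)
    (hf : ∀ u v, f (u + v) = f u + f v)
    (hμ : ∀ x, μ x ≤ μ' (f x)) (hν : ∀ x, ν x ≤ ν' (f x)) (y : S) :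
    fSum μ ν y ≤ fSum μ' ν' (f y) :=
  fSum_le_of_forall y fun u v hy => calc
    min (μ u) (ν v) ≤ min (μ' (f u)) (ν' (f v)) := min_le_min (hμ u) (hν v)
    _ ≤ fSum μ' ν' (f u + f v) := min_le_fSum_add hμ' _ _
    _ = fSum μ' ν' (f y) := by rw [hy, hf]

end fSum

theorem fSum_isFuzzyLeftIdeal {S G : Type*} [AddCommMonoid S] [AddCommMonoid G]
    [GammaSemiring S G] (μ₁ μ₂ : S → ℝ)
    (h₁ : IsFuzzyLeftIdeal S G μ₁) (h₂ : IsFuzzyLeftIdeal S G μ₂) :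
    IsFuzzyLeftIdeal S G (fSum μ₁ μ₂) := by
  obtain ⟨hI₁, h0₁, hadd₁, hl₁⟩ := h₁
  obtain ⟨hI₂, h0₂, hadd₂, hl₂⟩ := h₂
  have hle₁ : ∀ x, μ₁ x ≤ 1 := fun x => (hI₁ x).2
  exact ⟨fSum_mem_Icc hI₁ (fun x => (hI₂ x).1), fSum_zero_eq_one hle₁ h0₁ h0₂,
    min_fSum_le_fSum_add hle₁ hadd₁ hadd₂, fun x γ =>
      fSum_le_fSum_map hle₁ _ (GammaSemiring.tmul_add x γ) (hl₁ x γ) (hl₂ x γ)⟩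
end

section
/- If μ₁ and μ₂ are fuzzy left ideals of a Γ-semiring S with μ₁(0)=μ₂(0)=1, then their composition μ₁∘μ₂, defined by (μ₁∘μ₂)(x) = sup over all representations x = Σ_{i=1}^{n} uᵢγᵢvᵢ of min over i of min(μ₁(uᵢ),μ₂(vᵢ)) (and 0 if no such representation exists), is a fuzzy left ideal of S. -/
open Classical

/-! Concatenating representations of `x` and `y` gives a representation of `x + y` whose value
is the minimum of the two values, and multiplying every term `uᵢγᵢvᵢ` of a representation of `y`
on the left by `xγ` gives, by associativity and `μ₁ (xγuᵢ) ≥ μ₁ uᵢ`, a representation of `xγy`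
of no smaller value; passing to suprema yields the two ideal inequalities. The one-term
representation `0 = 0γ0` has value `1`. -/

theorem Fin.univ_inf'_append {α : Type*} [SemilatticeInf α] {m n : ℕ}
    (f : Fin (m + 1) → α) (g : Fin (n + 1) → α) :
    Finset.univ.inf' Finset.univ_nonempty (Fin.append f g) =
      Finset.univ.inf' Finset.univ_nonempty f ⊓ Finset.univ.inf' Finset.univ_nonempty g := by
  refine eq_of_forall_le_iff fun c => ?_
  simp [Finset.le_inf'_iff, Fin.forall_fin_add]

theorem Real.min_sSup_le_sSup {A B C : Set ℝ} (hC : BddAbove C) (hC₀ : 0 ≤ sSup C)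
    (hmin : ∀ a ∈ A, ∀ b ∈ B, min a b ∈ C) : min (sSup A) (sSup B) ≤ sSup C := by
  by_contra! hlt
  obtain ⟨hA, hB⟩ := lt_min_iff.1 hlt
  -- `sSup ∅ = 0 ≤ sSup C`, so a set whose supremum exceeds `sSup C` is nonempty.
  have nonempty_of_lt {D : Set ℝ} (hD : sSup C < sSup D) : D.Nonempty :=
    Set.nonempty_iff_ne_empty.2 fun hempty => by simp [hempty] at hD; linarith
  obtain ⟨a, ha, hca⟩ := exists_lt_of_lt_csSup (nonempty_of_lt hA) hA
  obtain ⟨b, hb, hcb⟩ := exists_lt_of_lt_csSup (nonempty_of_lt hB) hB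
  exact (le_csSup hC (hmin a ha b hb)).not_gt (lt_min hca hcb)

theorem GammaSemiring.tmul_sum {S G ι : Type*} [AddCommMonoid S] [AddCommMonoid G]
    [GammaSemiring S G] (x : S) (γ : G) (s : Finset ι) (f : ι → S) :
    tmul x γ (∑ i ∈ s, f i) = ∑ i ∈ s, tmul x γ (f i) :=
  map_sum (⟨⟨tmul x γ, tmul_zero x γ⟩, tmul_add x γ⟩ : S →+ S) f s

section FComp

open GammaSemiring

variable {S G : Type*} [AddCommMonoid S] [AddCommMonoid G] [GammaSemiring S G]
  {μ ν : S → ℝ} {x y : S} {r : ℝ}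

variable (S G) in
def fCompValues (μ ν : S → ℝ) (x : S) : Set ℝ :=
  {r : ℝ | ∃ (n : ℕ) (u v : Fin (n + 1) → S) (γ : Fin (n + 1) → G),
    x = ∑ i, tmul (u i) (γ i) (v i) ∧
    r = Finset.univ.inf' Finset.univ_nonempty (fun i => min (μ (u i)) (ν (v i)))}

theorem nonneg_of_mem_fCompValues (hμ : ∀ x, 0 ≤ μ x) (hν : ∀ x, 0 ≤ ν x)
    (hr : r ∈ fCompValues S G μ ν x) : 0 ≤ r := by
  obtain ⟨n, u, v, γ, -, rfl⟩ := hr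
  exact Finset.le_inf' _ _ fun i _ => le_min (hμ _) (hν _)

theorem le_one_of_mem_fCompValues (hμ : ∀ x, μ x ≤ 1) (hr : r ∈ fCompValues S G μ ν x) :
    r ≤ 1 := by
  obtain ⟨n, u, v, γ, -, rfl⟩ := hr
  exact (Finset.inf'_le _ (Finset.mem_univ 0)).trans (min_le_of_left_le (hμ _))

theorem bddAbove_fCompValues (hμ : ∀ x, μ x ≤ 1) : BddAbove (fCompValues S G μ ν x) :=
  ⟨1, fun _ => le_one_of_mem_fCompValues hμ⟩

theorem fComp_nonneg (hμ : ∀ x, 0 ≤ μ x) (hν : ∀ x, 0 ≤ ν x) : 0 ≤ fComp S G μ ν x :=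
  Real.sSup_nonneg fun _ => nonneg_of_mem_fCompValues hμ hν

theorem fComp_le_one (hμ : ∀ x, μ x ≤ 1) : fComp S G μ ν x ≤ 1 :=
  Real.sSup_le (fun _ => le_one_of_mem_fCompValues hμ) zero_le_one

theorem one_mem_fCompValues_zero (hμ : μ 0 = 1) (hν : ν 0 = 1) :
    1 ∈ fCompValues S G μ ν 0 :=
  ⟨0, 0, 0, 0, by simp [tmul_zero], by simp [hμ, hν]⟩

theorem fComp_zero (hμ : ∀ x, μ x ≤ 1) (hμ₀ : μ 0 = 1) (hν₀ : ν 0 = 1) :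
    fComp S G μ ν 0 = 1 :=
  (fComp_le_one hμ).antisymm
    (le_csSup (bddAbove_fCompValues hμ) (one_mem_fCompValues_zero hμ₀ hν₀))

theorem min_mem_fCompValues_add {a b : ℝ} (ha : a ∈ fCompValues S G μ ν x)
    (hb : b ∈ fCompValues S G μ ν y) : min a b ∈ fCompValues S G μ ν (x + y) := by
  obtain ⟨m, u, v, γ, rfl, rfl⟩ := ha
  obtain ⟨n, p, q, δ, rfl, rfl⟩ := hb
  refine ⟨m + 1 + n, (Fin.append u p : Fin (m + 1 + (n + 1)) → S),
    (Fin.append v q : Fin (m + 1 + (n + 1)) → S), (Fin.append γ δ : Fin (m + 1 + (n + 1)) → G),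
    ?_, ?_⟩
  · show _ = ∑ i : Fin (m + 1 + (n + 1)), _
    rw [Fin.sum_univ_add (a := m + 1) (b := n + 1)]
    simp only [Fin.append_left, Fin.append_right]
  · rw [← Fin.univ_inf'_append]
    congr 1
    ext i
    refine Fin.addCases (fun j => ?_) (fun j => ?_) i <;> simp

theorem min_fComp_le_fComp_add (hμ₀ : ∀ x, 0 ≤ μ x) (hν₀ : ∀ x, 0 ≤ ν x)
    (hμ : ∀ x, μ x ≤ 1) :
    min (fComp S G μ ν x) (fComp S G μ ν y) ≤ fComp S G μ ν (x + y) :=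
  Real.min_sSup_le_sSup (bddAbove_fCompValues hμ) (fComp_nonneg hμ₀ hν₀)
    fun _ ha _ hb => min_mem_fCompValues_add ha hb

theorem exists_ge_mem_fCompValues_tmul (hμ : ∀ (x : S) (γ : G) (y : S), μ y ≤ μ (tmul x γ y))
    (γ : G) (hr : r ∈ fCompValues S G μ ν y) :
    ∃ r' ∈ fCompValues S G μ ν (tmul x γ y), r ≤ r' := by
  obtain ⟨n, u, v, δ, rfl, rfl⟩ := hr
  refine ⟨_, ⟨n, fun i => tmul x γ (u i), v, δ, ?_, rfl⟩, ?_⟩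
  · simp only [tmul_sum, tmul_assoc]
  · exact Finset.inf'_mono_fun fun i _ => min_le_min_right _ (hμ x γ (u i))

theorem fComp_le_fComp_tmul (hμ₀ : ∀ x, 0 ≤ μ x) (hν₀ : ∀ x, 0 ≤ ν x) (hμ : ∀ x, μ x ≤ 1)
    (hμl : ∀ (x : S) (γ : G) (y : S), μ y ≤ μ (tmul x γ y)) (γ : G) :
    fComp S G μ ν y ≤ fComp S G μ ν (tmul x γ y) :=
  Real.sSup_le (fun _ hr =>
    let ⟨_, hr', hle⟩ := exists_ge_mem_fCompValues_tmul hμl γ hr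
    le_csSup_of_le (bddAbove_fCompValues hμ) hr' hle) (fComp_nonneg hμ₀ hν₀)

end FComp

theorem fComp_isFuzzyLeftIdeal {S G : Type*} [AddCommMonoid S] [AddCommMonoid G]
    [GammaSemiring S G] (μ₁ μ₂ : S → ℝ)
    (h₁ : IsFuzzyLeftIdeal S G μ₁) (h₂ : IsFuzzyLeftIdeal S G μ₂) :
    IsFuzzyLeftIdeal S G (fComp S G μ₁ μ₂) := by
  obtain ⟨hμ₁, hμ₁_zero, -, hμ₁_left⟩ := h₁
  obtain ⟨hμ₂, hμ₂_zero, -, -⟩ := h₂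
  have nonneg₁ x : 0 ≤ μ₁ x := (hμ₁ x).1
  have nonneg₂ x : 0 ≤ μ₂ x := (hμ₂ x).1
  have le_one₁ x : μ₁ x ≤ 1 := (hμ₁ x).2
  exact ⟨fun _ => ⟨fComp_nonneg nonneg₁ nonneg₂, fComp_le_one le_one₁⟩,
    fComp_zero le_one₁ hμ₁_zero hμ₂_zero,
    fun _ _ => min_fComp_le_fComp_add nonneg₁ nonneg₂ le_one₁,
    fun _ γ _ => fComp_le_fComp_tmul nonneg₁ nonneg₂ le_one₁ hμ₁_left γ⟩
end

section
/- If S is a Γ-semiring with left unity (there exist finitely many eᵢ ∈ S, δᵢ ∈ Γ with Σᵢ eᵢδᵢx = x for all x ∈ S), then the constant fuzzy subset 1 (value 1 everywhere) is a left identity for composition of fuzzy left ideals: 1∘μ = μ for every fuzzy left ideal μ. -/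
open Classical

theorem Finset.inf'_le_apply_sum {S ι : Type*} [AddCommMonoid S] {μ : S → ℝ}
    (hadd : ∀ x y, min (μ x) (μ y) ≤ μ (x + y)) (s : Finset ι) (hs : s.Nonempty)
    (f : ι → S) : s.inf' hs (fun i => μ (f i)) ≤ μ (∑ i ∈ s, f i) := by
  induction hs using Finset.Nonempty.cons_induction with
  | singleton a => simp
  | cons a s _ hs ih =>
    rw [Finset.sum_cons, Finset.inf'_cons hs]
    exact (min_le_min le_rfl ih).trans (hadd _ _)

section fComp

variable {S G : Type*} [AddCommMonoid S] [AddCommMonoid G] [GammaSemiring S G]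

theorem fComp_le_of_isFuzzyLeftIdeal {μ : S → ℝ} (hμ : IsFuzzyLeftIdeal S G μ)
    (ν : S → ℝ) (x : S) : fComp S G ν μ x ≤ μ x := by
  obtain ⟨hbd, -, hadd, hleft⟩ := hμ
  refine Real.sSup_le ?_ (hbd x).1
  rintro r ⟨n, u, v, γ, rfl, rfl⟩
  calc Finset.univ.inf' Finset.univ_nonempty (fun i => min (ν (u i)) (μ (v i)))
      ≤ Finset.univ.inf' Finset.univ_nonempty
          (fun i => μ (GammaSemiring.tmul (u i) (γ i) (v i))) :=
        Finset.inf'_mono_fun fun i _ => (min_le_right _ _).trans (hleft _ _ _)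
    _ ≤ μ (∑ i, GammaSemiring.tmul (u i) (γ i) (v i)) :=
        Finset.inf'_le_apply_sum hadd _ _ _

theorem le_fComp_one_of_sum_tmul_eq_self {k : ℕ} (e : Fin (k + 1) → S)
    (δ : Fin (k + 1) → G) (he : ∀ x : S, ∑ i, GammaSemiring.tmul (e i) (δ i) x = x)
    {μ : S → ℝ} (hμ : ∀ x, μ x ≤ 1) (x : S) :
    μ x ≤ fComp S G (fun _ => (1 : ℝ)) μ x := by
  -- `x = ∑ eᵢ δᵢ x` is a representation of weight `min 1 (μ x) = μ x`.
  refine le_csSup ⟨1, ?_⟩ ⟨k, e, fun _ => x, δ, (he x).symm, by simp [hμ x]⟩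
  rintro r ⟨n, u, v, γ, -, rfl⟩
  exact (Finset.inf'_le _ (Finset.mem_univ 0)).trans ((min_le_right _ _).trans (hμ _))

end fComp

theorem one_fComp {S G : Type*} [AddCommMonoid S] [AddCommMonoid G]
    [GammaSemiring S G]
    (hunity : ∃ (k : ℕ) (e : Fin (k + 1) → S) (δ : Fin (k + 1) → G),
      ∀ x : S, ∑ i, GammaSemiring.tmul (e i) (δ i) x = x)
    (μ : S → ℝ) (hμ : IsFuzzyLeftIdeal S G μ) :
    fComp S G (fun _ => (1 : ℝ)) μ = μ := by
  obtain ⟨k, e, δ, he⟩ := hunity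
  funext x
  exact le_antisymm (fComp_le_of_isFuzzyLeftIdeal hμ _ x)
    (le_fComp_one_of_sum_tmul_eq_self e δ he (fun y => (hμ.1 y).2) x)
end

section
/- In the lattice of fuzzy left ideals of a Γ-semiring (with join ⊕ and meet ∩), if every fuzzy left ideal is a fuzzy left k-ideal, then the lattice is modular; concretely: if μ₂∩μ₁ = μ₂∩μ₃, μ₂⊕μ₁ = μ₂⊕μ₃, and μ₁ ⊆ μ₃, then μ₁ = μ₃. -/
open Classical

/-
For each decomposition x = u + v, the k-ideal property of μ₃ yields μ₃ u ≥ min (μ₃ x) (μ₁ v), so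
that u lies, to level min (μ₃ x) (μ₂ u) (μ₁ v), in μ₂ ∩ μ₃ = μ₂ ∩ μ₁ ⊆ μ₁, and hence
μ₁ x ≥ min (μ₁ u) (μ₁ v) ≥ min (μ₃ x) (μ₂ u) (μ₁ v). Taking the supremum over all decompositions,
μ₁ x ≥ min (μ₃ x) ((μ₂ ⊕ μ₁) x) = min (μ₃ x) ((μ₂ ⊕ μ₃) x) = μ₃ x, the last step via x = 0 + x.
-/

open Set

section FuzzySum

variable {S : Type*} [AddCommMonoid S] {μ ν : S → ℝ}

theorem fSum_le {x : S} {b : ℝ} (h : ∀ u v, x = u + v → min (μ u) (ν v) ≤ b) :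
    fSum μ ν x ≤ b :=
  csSup_le ⟨_, 0, x, (zero_add x).symm, rfl⟩ (by rintro _ ⟨u, v, huv, rfl⟩; exact h u v huv)

theorem min_le_fSum (hμ : BddAbove (range μ)) (u v : S) : min (μ u) (ν v) ≤ fSum μ ν (u + v) := by
  obtain ⟨c, hc⟩ := hμ
  refine le_csSup ⟨c, ?_⟩ ⟨u, v, rfl, rfl⟩
  rintro _ ⟨u', v', -, rfl⟩
  exact (min_le_left _ _).trans (hc (mem_range_self u'))

theorem le_fSum_of_le_map_zero (hμ : BddAbove (range μ)) {x : S} (hx : ν x ≤ μ 0) :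
    ν x ≤ fSum μ ν x := by
  simpa only [min_eq_right hx, zero_add] using min_le_fSum (ν := ν) hμ 0 x

theorem min_fSum_le {x : S} {c b : ℝ}
    (h : ∀ u v, x = u + v → min c (min (μ u) (ν v)) ≤ b) : min c (fSum μ ν x) ≤ b := by
  rcases le_or_gt c b with hcb | hbc
  · exact (min_le_left _ _).trans hcb
  · refine (min_le_right _ _).trans (fSum_le fun u v huv => ?_)
    by_contra! hlt
    exact (h u v huv).not_gt (lt_min hbc hlt)

end FuzzySum

theorem min_min_le_apply_add {S : Type*} [Add S] {μ₁ μ₂ μ₃ : S → ℝ}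
    (hadd : ∀ x y, min (μ₁ x) (μ₁ y) ≤ μ₁ (x + y))
    (hk : ∀ x y, min (μ₃ (x + y)) (μ₃ y) ≤ μ₃ x)
    (hmeet : ∀ x, min (μ₂ x) (μ₃ x) ≤ μ₁ x) (hle : ∀ x, μ₁ x ≤ μ₃ x) (u v : S) :
    min (μ₃ (u + v)) (min (μ₂ u) (μ₁ v)) ≤ μ₁ (u + v) := by
  have hu : min (μ₃ (u + v)) (μ₁ v) ≤ μ₃ u :=
    (min_le_min_left _ (hle v)).trans (hk u v)
  have hu₁ : min (μ₃ (u + v)) (min (μ₂ u) (μ₁ v)) ≤ μ₁ u := by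
    refine le_trans (le_min ?_ ?_) (hmeet u)
    · exact (min_le_right _ _).trans (min_le_left _ _)
    · exact le_trans (min_le_min_left _ (min_le_right _ _)) hu
  exact (le_min hu₁ ((min_le_right _ _).trans (min_le_right _ _))).trans (hadd u v)

theorem fuzzyLeftIdeal_modular {S G : Type*} [AddCommMonoid S] [AddCommMonoid G]
    [GammaSemiring S G] (μ₁ μ₂ μ₃ : S → ℝ)
    (h₁ : IsFuzzyLeftIdeal S G μ₁) (h₂ : IsFuzzyLeftIdeal S G μ₂)
    (h₃ : IsFuzzyLeftIdeal S G μ₃)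
    (hk : ∀ x y : S, min (μ₃ (x + y)) (μ₃ y) ≤ μ₃ x)
    (hmeet : (fun x => min (μ₂ x) (μ₁ x)) = fun x => min (μ₂ x) (μ₃ x))
    (hjoin : fSum μ₂ μ₁ = fSum μ₂ μ₃)
    (hle : ∀ x : S, μ₁ x ≤ μ₃ x) :
    μ₁ = μ₃ := by
  funext x
  refine le_antisymm (hle x) ?_
  have hbdd : BddAbove (range μ₂) := ⟨1, by rintro _ ⟨u, rfl⟩; exact (h₂.1 u).2⟩
  have hjoin_x : μ₃ x ≤ fSum μ₂ μ₁ x := by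
    rw [hjoin]
    exact le_fSum_of_le_map_zero hbdd (h₂.2.1 ▸ (h₃.1 x).2)
  have hmeet_le : ∀ u, min (μ₂ u) (μ₃ u) ≤ μ₁ u := fun u =>
    (congrFun hmeet u).symm.le.trans (min_le_right _ _)
  calc μ₃ x = min (μ₃ x) (fSum μ₂ μ₁ x) := (min_eq_left hjoin_x).symm
    _ ≤ μ₁ x := min_fSum_le fun u v huv => huv ▸
        min_min_le_apply_add h₁.2.2.1 hk hmeet_le hle u v
end
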